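/- arXiv:1701.01850 — 4 statements merged into one kernel-verified Lean document; each statement's English description precedes it below -/
import Mathlib

section
/- For vectors u_1, ..., u_n of nonnegative reals with u_1 ≥ u_2 ≥ ... ≥ u_n ≥ 0, and any p ∈ [0,1] and index k with 1 ≤ k < n, one has (∑_{i=1}^k u_i^p)/(∑_{j=k+1}^n u_j^p) ≤ (∑_{i=1}^k u_i)/(∑_{j=k+1}^n u_j), provided the denominators are nonzero. -/
open Finset

lemma aux_rpow_cross (a b p : ℝ) (hb : 0 ≤ b) (hba : b ≤ a) (hp0 : 0 < p) (hp1 : p ≤ 1) :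
    a ^ p * b ≤ a * b ^ p := by
  have ha : 0 ≤ a := hb.trans hba
  rcases eq_or_lt_of_le hb with hb0 | hb0
  · rw [← hb0, Real.zero_rpow hp0.ne', mul_zero, mul_zero]
  have ha0 : 0 < a := lt_of_lt_of_le hb0 hba
  have h1 : b ^ (1 - p) ≤ a ^ (1 - p) :=
    Real.rpow_le_rpow hb hba (by linarith)
  calc a ^ p * b = a ^ p * (b ^ p * b ^ (1 - p)) := by
        rw [← Real.rpow_add hb0, add_sub_cancel, Real.rpow_one]
      _ ≤ a ^ p * (b ^ p * a ^ (1 - p)) := by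
        have h2 : 0 ≤ a ^ p := Real.rpow_nonneg ha p
        have h3 : 0 ≤ b ^ p := Real.rpow_nonneg hb p
        gcongr
      _ = a * b ^ p := by
        rw [show a ^ p * (b ^ p * a ^ (1 - p)) = (a ^ p * a ^ (1 - p)) * b ^ p by ring,
          ← Real.rpow_add ha0, add_sub_cancel, Real.rpow_one]

theorem stmt_0 (n k : ℕ) (u : Fin n → ℝ) (hu : Antitone u) (hpos : ∀ i, 0 ≤ u i)
    (p : ℝ) (hp0 : 0 < p) (hp1 : p ≤ 1) (hk1 : 1 ≤ k) (hkn : k < n)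
    (hden : 0 < ∑ j ∈ univ.filter (fun j : Fin n => k ≤ (j : ℕ)), u j)
    (hdenp : 0 < ∑ j ∈ univ.filter (fun j : Fin n => k ≤ (j : ℕ)), u j ^ p) :
    (∑ i ∈ univ.filter (fun i : Fin n => (i : ℕ) < k), u i ^ p) /
      (∑ j ∈ univ.filter (fun j : Fin n => k ≤ (j : ℕ)), u j ^ p) ≤
    (∑ i ∈ univ.filter (fun i : Fin n => (i : ℕ) < k), u i) /
      (∑ j ∈ univ.filter (fun j : Fin n => k ≤ (j : ℕ)), u j) := by
  rw [div_le_div_iff₀ hdenp hden]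
  rw [Finset.sum_mul_sum, Finset.sum_mul_sum]
  apply Finset.sum_le_sum
  intro i hi
  apply Finset.sum_le_sum
  intro j hj
  simp only [mem_filter] at hi hj
  have hij : u j ≤ u i := hu (by
    rw [Fin.le_def]; omega)
  exact aux_rpow_cross (u i) (u j) p (hpos j) hij hp0 hp1
end

section
/- Let A ∈ ℝ^{m×n} and suppose there are constants 0 < α ≤ β such that α‖X‖_F^2 ≤ ‖AX‖_F^2 ≤ β‖X‖_F^2 for all matrices X with at most 2k nonzero rows. Then for any X₁, X₂ ∈ ℝ^{n×r} each with at most k nonzero rows and with disjoint row supports, |⟨AX₁, AX₂⟩| ≤ ((β − α)/2)·‖X₁‖_F·‖X₂‖_F, where ⟨M, N⟩ = tr(MᵀN). -/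
open Finset Matrix

lemma expand_sq9 {ι κ : Type*} [Fintype ι] [Fintype κ] (P Q : ι → κ → ℝ) :
    ∑ i, ∑ j, (P i j + Q i j) ^ 2 =
      ((∑ i, ∑ j, P i j ^ 2) + ∑ i, ∑ j, Q i j ^ 2) + 2 * ∑ i, ∑ j, P i j * Q i j := by
  rw [Finset.mul_sum, ← Finset.sum_add_distrib, ← Finset.sum_add_distrib]
  refine Finset.sum_congr rfl fun i _ => ?_
  rw [Finset.mul_sum, ← Finset.sum_add_distrib, ← Finset.sum_add_distrib]
  refine Finset.sum_congr rfl fun j _ => ?_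
  ring

theorem stmt_9 (m n r k : ℕ) (A : Matrix (Fin m) (Fin n) ℝ) (α β : ℝ)
    (hα : 0 < α) (hαβ : α ≤ β)
    (hRIP : ∀ X : Matrix (Fin n) (Fin r) ℝ,
      (univ.filter (fun i : Fin n => (fun j => X i j) ≠ 0)).card ≤ 2 * k →
      α * (∑ i, ∑ j, (X i j) ^ 2) ≤ ∑ i, ∑ j, ((A * X) i j) ^ 2 ∧
        ∑ i, ∑ j, ((A * X) i j) ^ 2 ≤ β * (∑ i, ∑ j, (X i j) ^ 2))
    (X₁ X₂ : Matrix (Fin n) (Fin r) ℝ)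
    (h1 : (univ.filter (fun i : Fin n => (fun j => X₁ i j) ≠ 0)).card ≤ k)
    (h2 : (univ.filter (fun i : Fin n => (fun j => X₂ i j) ≠ 0)).card ≤ k)
    (hdisj : ∀ i : Fin n, (fun j => X₁ i j) = 0 ∨ (fun j => X₂ i j) = 0) :
    |Matrix.trace ((A * X₁)ᵀ * (A * X₂))| ≤
      ((β - α) / 2) * Real.sqrt (∑ i, ∑ j, (X₁ i j) ^ 2) *
        Real.sqrt (∑ i, ∑ j, (X₂ i j) ^ 2) := by
  set s1 : ℝ := ∑ i, ∑ j, (X₁ i j) ^ 2 with hs1def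
  set s2 : ℝ := ∑ i, ∑ j, (X₂ i j) ^ 2 with hs2def
  set c : ℝ := ∑ i, ∑ j, (A * X₁) i j * (A * X₂) i j with hcdef
  have htr : Matrix.trace ((A * X₁)ᵀ * (A * X₂)) = c := by
    rw [hcdef, Finset.sum_comm]
    simp only [Matrix.trace, Matrix.diag, Matrix.mul_apply, Matrix.transpose_apply]
  have hs1nn : 0 ≤ s1 := by positivity
  have hs2nn : 0 ≤ s2 := by positivity
  -- key scaled inequality
  have key : ∀ t u : ℝ, 4 * (t * u * c) ≤ (β - α) * (t ^ 2 * s1 + u ^ 2 * s2) := by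
    intro t u
    set Y₁ : Matrix (Fin n) (Fin r) ℝ := t • X₁ with hY1
    set Y₂ : Matrix (Fin n) (Fin r) ℝ := u • X₂ with hY2
    have hrow1 : ∀ i, (fun j => X₁ i j) = 0 → (fun j => Y₁ i j) = 0 := by
      intro i h
      funext j
      have : X₁ i j = 0 := congrFun h j
      simp [hY1, this]
    have hrow2 : ∀ i, (fun j => X₂ i j) = 0 → (fun j => Y₂ i j) = 0 := by
      intro i h
      funext j
      have : X₂ i j = 0 := congrFun h j
      simp [hY2, this]
    have hcard : ∀ (Z : Matrix (Fin n) (Fin r) ℝ),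
        (∀ i, (fun j => X₁ i j) = 0 → (fun j => X₂ i j) = 0 → (fun j => Z i j) = 0) →
        (univ.filter (fun i : Fin n => (fun j => Z i j) ≠ 0)).card ≤ 2 * k := by
      intro Z hZ
      have hsub : (univ.filter (fun i : Fin n => (fun j => Z i j) ≠ 0)) ⊆
          (univ.filter (fun i : Fin n => (fun j => X₁ i j) ≠ 0)) ∪
            (univ.filter (fun i : Fin n => (fun j => X₂ i j) ≠ 0)) := by
        intro i hi
        simp only [Finset.mem_filter, Finset.mem_union, Finset.mem_univ, true_and] at hi ⊢
        by_contra hcon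
        push_neg at hcon
        exact hi (hZ i hcon.1 hcon.2)
      calc (univ.filter (fun i : Fin n => (fun j => Z i j) ≠ 0)).card
          ≤ _ := Finset.card_le_card hsub
        _ ≤ (univ.filter (fun i : Fin n => (fun j => X₁ i j) ≠ 0)).card +
            (univ.filter (fun i : Fin n => (fun j => X₂ i j) ≠ 0)).card :=
            Finset.card_union_le _ _
        _ ≤ 2 * k := by omega
    have hcardP : (univ.filter (fun i : Fin n => (fun j => (Y₁ + Y₂) i j) ≠ 0)).card ≤ 2 * k := by
      refine hcard _ fun i e1 e2 => ?_
      funext j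
      have a1 := congrFun (hrow1 i e1) j
      have a2 := congrFun (hrow2 i e2) j
      simp only [Pi.zero_apply] at a1 a2
      simp [a1, a2]
    have hcardM : (univ.filter (fun i : Fin n => (fun j => (Y₁ - Y₂) i j) ≠ 0)).card ≤ 2 * k := by
      refine hcard _ fun i e1 e2 => ?_
      funext j
      have a1 := congrFun (hrow1 i e1) j
      have a2 := congrFun (hrow2 i e2) j
      simp only [Pi.zero_apply] at a1 a2
      simp [a1, a2]
    have hP := hRIP (Y₁ + Y₂) hcardP
    have hM := hRIP (Y₁ - Y₂) hcardM
    -- cross term of Y's is zero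
    have hcross : ∑ i, ∑ j, Y₁ i j * Y₂ i j = 0 := by
      refine Finset.sum_eq_zero fun i _ => Finset.sum_eq_zero fun j _ => ?_
      rcases hdisj i with h | h
      · have := congrFun h j
        simp only [Pi.zero_apply] at this
        simp [hY1, this]
      · have := congrFun h j
        simp only [Pi.zero_apply] at this
        simp [hY2, this]
    have hSY1 : ∑ i, ∑ j, Y₁ i j ^ 2 = t ^ 2 * s1 := by
      rw [hs1def, Finset.mul_sum]
      refine Finset.sum_congr rfl fun i _ => ?_
      rw [Finset.mul_sum]
      refine Finset.sum_congr rfl fun j _ => ?_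
      simp [hY1]; ring
    have hSY2 : ∑ i, ∑ j, Y₂ i j ^ 2 = u ^ 2 * s2 := by
      rw [hs2def, Finset.mul_sum]
      refine Finset.sum_congr rfl fun i _ => ?_
      rw [Finset.mul_sum]
      refine Finset.sum_congr rfl fun j _ => ?_
      simp [hY2]; ring
    have hSP : ∑ i, ∑ j, ((Y₁ + Y₂) i j) ^ 2 = t ^ 2 * s1 + u ^ 2 * s2 := by
      have := expand_sq9 (fun i j => Y₁ i j) (fun i j => Y₂ i j)
      simp only [Matrix.add_apply]
      rw [this, hcross, hSY1, hSY2]; ring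
    have hSM : ∑ i, ∑ j, ((Y₁ - Y₂) i j) ^ 2 = t ^ 2 * s1 + u ^ 2 * s2 := by
      have := expand_sq9 (fun i j => Y₁ i j) (fun i j => -Y₂ i j)
      simp only [Matrix.sub_apply, sub_eq_add_neg]
      rw [this, hSY1]
      have h1' : ∑ i, ∑ j, (-Y₂ i j) ^ 2 = u ^ 2 * s2 := by
        simp only [neg_sq]
        exact hSY2
      have h2' : ∑ i, ∑ j, Y₁ i j * -Y₂ i j = 0 := by
        simp only [mul_neg, Finset.sum_neg_distrib]
        rw [hcross]; ring
      rw [h1', h2']; ring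
    -- cross term of A*Y's equals t*u*c
    have hAcross : ∑ i, ∑ j, (A * Y₁) i j * (A * Y₂) i j = t * u * c := by
      rw [hcdef, Finset.mul_sum]
      refine Finset.sum_congr rfl fun i _ => ?_
      rw [Finset.mul_sum]
      refine Finset.sum_congr rfl fun j _ => ?_
      rw [hY1, hY2, Matrix.mul_smul, Matrix.mul_smul]
      simp; ring
    have hASP : ∑ i, ∑ j, ((A * (Y₁ + Y₂)) i j) ^ 2 =
        ((∑ i, ∑ j, ((A * Y₁) i j) ^ 2) + ∑ i, ∑ j, ((A * Y₂) i j) ^ 2) + 2 * (t * u * c) := by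
      rw [Matrix.mul_add]
      have := expand_sq9 (fun i j => (A * Y₁) i j) (fun i j => (A * Y₂) i j)
      simp only [Matrix.add_apply]
      rw [this, hAcross]
    have hASM : ∑ i, ∑ j, ((A * (Y₁ - Y₂)) i j) ^ 2 =
        ((∑ i, ∑ j, ((A * Y₁) i j) ^ 2) + ∑ i, ∑ j, ((A * Y₂) i j) ^ 2) - 2 * (t * u * c) := by
      rw [Matrix.mul_sub]
      have := expand_sq9 (fun i j => (A * Y₁) i j) (fun i j => -(A * Y₂) i j)
      simp only [Matrix.sub_apply, sub_eq_add_neg]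
      rw [this]
      have h1' : ∑ i, ∑ j, (-(A * Y₂) i j) ^ 2 = ∑ i, ∑ j, ((A * Y₂) i j) ^ 2 := by
        simp [neg_sq]
      have h2' : ∑ i, ∑ j, (A * Y₁) i j * -(A * Y₂) i j = -(t * u * c) := by
        simp only [mul_neg, Finset.sum_neg_distrib]
        rw [hAcross]
      rw [h1', h2']; ring
    have hup := hP.2
    have hlo := hM.1
    rw [hSP, hASP] at hup
    rw [hSM, hASM] at hlo
    linarith
  -- dispose of degenerate cases
  rw [htr]
  rcases eq_or_lt_of_le hs1nn with h0 | hs1pos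
  · have hX1 : X₁ = 0 := by
      ext i j
      have hz : ∀ i ∈ (univ : Finset (Fin n)), ∑ j, X₁ i j ^ 2 = 0 := by
        rw [← Finset.sum_eq_zero_iff_of_nonneg (fun i _ => by positivity)]
        exact h0.symm
      have hz2 := (Finset.sum_eq_zero_iff_of_nonneg (fun j _ => by positivity : ∀ j ∈ univ, (0:ℝ) ≤ X₁ i j ^ 2)).mp (hz i (Finset.mem_univ i)) j (Finset.mem_univ j)
      have := pow_eq_zero_iff (n := 2) (by norm_num) |>.mp hz2
      simpa using this
    have : c = 0 := by
      rw [hcdef]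
      simp [hX1]
    rw [this, ← h0]
    simp
  rcases eq_or_lt_of_le hs2nn with h0 | hs2pos
  · have hX2 : X₂ = 0 := by
      ext i j
      have hz : ∀ i ∈ (univ : Finset (Fin n)), ∑ j, X₂ i j ^ 2 = 0 := by
        rw [← Finset.sum_eq_zero_iff_of_nonneg (fun i _ => by positivity)]
        exact h0.symm
      have hz2 := (Finset.sum_eq_zero_iff_of_nonneg (fun j _ => by positivity : ∀ j ∈ univ, (0:ℝ) ≤ X₂ i j ^ 2)).mp (hz i (Finset.mem_univ i)) j (Finset.mem_univ j)
      have := pow_eq_zero_iff (n := 2) (by norm_num) |>.mp hz2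
      simpa using this
    have : c = 0 := by
      rw [hcdef]
      simp [hX2]
    rw [this, ← h0]
    simp
  -- main case
  have hr1 : Real.sqrt s1 > 0 := Real.sqrt_pos.mpr hs1pos
  have hr2 : Real.sqrt s2 > 0 := Real.sqrt_pos.mpr hs2pos
  have hq1 : Real.sqrt s1 ^ 2 = s1 := Real.sq_sqrt hs1nn
  have hq2 : Real.sqrt s2 ^ 2 = s2 := Real.sq_sqrt hs2nn
  have k1 := key (Real.sqrt s2) (Real.sqrt s1)
  have k2 := key (Real.sqrt s2) (-Real.sqrt s1)
  rw [hq1, hq2] at k1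
  rw [hq2, neg_sq, hq1] at k2
  have hP : (0:ℝ) < Real.sqrt s1 * Real.sqrt s2 := mul_pos hr1 hr2
  have hss : s2 * s1 + s1 * s2 = 2 * ((Real.sqrt s1 * Real.sqrt s2) ^ 2) := by
    rw [mul_pow, hq1, hq2]; ring
  rw [hss] at k1 k2
  rw [abs_le]
  constructor
  · nlinarith [hP, k2]
  · nlinarith [hP, k1]
end

section
/- Define, for p ∈ (0,1], a fixed matrix A ∈ ℝ^{m×n}, and a nonzero X with all columns in ker A whose rows are ordered by decreasing Euclidean norm, θ(p, X, k) = (∑_{i=1}^k ‖X_{row i}‖_2^p)/(∑_{i=k+1}^n ‖X_{row i}‖_2^p). Then θ is nondecreasing in p: for 0 < p₁ ≤ p₂ ≤ 1, θ(p₁, X, k) ≤ θ(p₂, X, k). -/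
open Finset

lemma key_ineq {a b p₁ p₂ : ℝ} (hb : 0 ≤ b) (hba : b ≤ a) (hp₁ : 0 < p₁)
    (hp₁₂ : p₁ ≤ p₂) : a ^ p₁ * b ^ p₂ ≤ a ^ p₂ * b ^ p₁ := by
  rcases eq_or_lt_of_le hb with hb0 | hb0
  · rw [← hb0, Real.zero_rpow (by linarith : p₁ ≠ 0),
      Real.zero_rpow (by linarith : p₂ ≠ 0), mul_zero, mul_zero]
  · have ha : 0 < a := lt_of_lt_of_le hb0 hba
    have h1 : a ^ p₂ = a ^ p₁ * a ^ (p₂ - p₁) := by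
      rw [← Real.rpow_add ha]; ring_nf
    have h2 : b ^ p₂ = b ^ p₁ * b ^ (p₂ - p₁) := by
      rw [← Real.rpow_add hb0]; ring_nf
    rw [h1, h2]
    have : b ^ (p₂ - p₁) ≤ a ^ (p₂ - p₁) :=
      Real.rpow_le_rpow hb hba (by linarith)
    have hap := Real.rpow_pos_of_pos ha p₁
    have hbp := (Real.rpow_pos_of_pos hb0 p₁).le
    nlinarith [mul_le_mul_of_nonneg_left this (mul_nonneg hap.le hbp)]

theorem stmt_12 (n r k : ℕ) (X : Matrix (Fin n) (Fin r) ℝ)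
    (hmono : Antitone (fun i : Fin n => Real.sqrt (∑ j, (X i j) ^ 2)))
    (hk1 : 1 ≤ k) (hkn : k < n)
    (p₁ p₂ : ℝ) (hp₁ : 0 < p₁) (hp₁₂ : p₁ ≤ p₂) (hp₂ : p₂ ≤ 1)
    (hden : 0 < ∑ i ∈ univ.filter (fun i : Fin n => k ≤ (i : ℕ)),
      (Real.sqrt (∑ j, (X i j) ^ 2)) ^ p₁) :
    (∑ i ∈ univ.filter (fun i : Fin n => (i : ℕ) < k), (Real.sqrt (∑ j, (X i j) ^ 2)) ^ p₁) /
      (∑ i ∈ univ.filter (fun i : Fin n => k ≤ (i : ℕ)), (Real.sqrt (∑ j, (X i j) ^ 2)) ^ p₁) ≤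
    (∑ i ∈ univ.filter (fun i : Fin n => (i : ℕ) < k), (Real.sqrt (∑ j, (X i j) ^ 2)) ^ p₂) /
      (∑ i ∈ univ.filter (fun i : Fin n => k ≤ (i : ℕ)), (Real.sqrt (∑ j, (X i j) ^ 2)) ^ p₂) := by
  set f : Fin n → ℝ := fun i => Real.sqrt (∑ j, (X i j) ^ 2) with hf
  have hf0 : ∀ i, 0 ≤ f i := fun i => Real.sqrt_nonneg _
  set B := univ.filter (fun i : Fin n => k ≤ (i : ℕ)) with hB
  set A := univ.filter (fun i : Fin n => (i : ℕ) < k) with hA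
  -- some i in B has f i > 0
  obtain ⟨i₀, hi₀B, hi₀⟩ : ∃ i ∈ B, 0 < f i ^ p₁ := by
    by_contra h
    push_neg at h
    have : ∑ i ∈ B, f i ^ p₁ ≤ 0 := Finset.sum_nonpos h
    linarith
  have hfi₀ : 0 < f i₀ := by
    by_contra h
    push_neg at h
    have : f i₀ = 0 := le_antisymm h (hf0 i₀)
    rw [this, Real.zero_rpow (ne_of_gt hp₁)] at hi₀
    exact lt_irrefl 0 hi₀
  have hden₂ : 0 < ∑ i ∈ B, f i ^ p₂ :=
    Finset.sum_pos' (fun i _ => Real.rpow_nonneg (hf0 i) _)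
      ⟨i₀, hi₀B, Real.rpow_pos_of_pos hfi₀ p₂⟩
  rw [div_le_div_iff₀ hden hden₂]
  rw [Finset.sum_mul_sum, Finset.sum_mul_sum]
  apply Finset.sum_le_sum
  intro i hiA
  apply Finset.sum_le_sum
  intro j hjB
  have hik : (i : ℕ) < k := (Finset.mem_filter.mp hiA).2
  have hkj : k ≤ (j : ℕ) := (Finset.mem_filter.mp hjB).2
  have hij : i ≤ j := by
    have : (i : ℕ) ≤ (j : ℕ) := le_of_lt (lt_of_lt_of_le hik hkj)
    exact Fin.le_def.mpr this
  have hfji : f j ≤ f i := hmono hij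
  exact key_ineq (hf0 j) hfji hp₁ hp₁₂
end

section
/- Let x : Fin n → ℝ≥0, S₁ a set of k+1 indices, and S a set of at most k indices disjoint from S₁ such that x_j ≤ min_{i∈S₁} x_i for all j ∈ S. Then for p > 0, (∑_{j∈S} x_j²)^{1/2} ≤ √k·(k+1)^{−1/p}·(∑_{i∈S₁} x_i^p)^{1/p}. -/
open Finset

theorem stmt_15 (n k : ℕ) (x : Fin n → ℝ) (hx : ∀ i, 0 ≤ x i)
    (S₁ S : Finset (Fin n)) (hdisj : Disjoint S S₁)
    (hS₁ : S₁.card = k + 1) (hS : S.card ≤ k)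
    (hle : ∀ j ∈ S, ∀ i ∈ S₁, x j ≤ x i)
    (p : ℝ) (hp : 0 < p) :
    Real.sqrt (∑ j ∈ S, x j ^ 2) ≤
      Real.sqrt k * ((k + 1 : ℝ)) ^ (-(1 / p)) * (∑ i ∈ S₁, x i ^ p) ^ (1 / p) := by
  have hS₁ne : S₁.Nonempty := Finset.card_pos.mp (by omega)
  obtain ⟨i₀, hi₀, hmin⟩ := S₁.exists_min_image x hS₁ne
  set m := x i₀ with hm
  have hm0 : 0 ≤ m := hx i₀
  have h1 : Real.sqrt (∑ j ∈ S, x j ^ 2) ≤ Real.sqrt k * m := by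
    have hsum : ∑ j ∈ S, x j ^ 2 ≤ (k : ℝ) * m ^ 2 := by
      calc ∑ j ∈ S, x j ^ 2 ≤ ∑ _j ∈ S, m ^ 2 := by
            apply Finset.sum_le_sum
            intro j hj
            exact pow_le_pow_left₀ (hx j) (hle j hj i₀ hi₀) 2
        _ = (S.card : ℝ) * m ^ 2 := by simp [Finset.sum_const, nsmul_eq_mul]
        _ ≤ (k : ℝ) * m ^ 2 := by
            apply mul_le_mul_of_nonneg_right _ (sq_nonneg m)
            exact_mod_cast hS
    calc Real.sqrt (∑ j ∈ S, x j ^ 2) ≤ Real.sqrt ((k:ℝ) * m ^ 2) :=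
          Real.sqrt_le_sqrt hsum
      _ = Real.sqrt k * m := by
          rw [Real.sqrt_mul (Nat.cast_nonneg k), Real.sqrt_sq hm0]
  have hk1 : (0:ℝ) < (k:ℝ) + 1 := by positivity
  have h2 : m ≤ ((k:ℝ) + 1) ^ (-(1/p)) * (∑ i ∈ S₁, x i ^ p) ^ (1 / p) := by
    have hsum2 : ((k:ℝ)+1) * m ^ p ≤ ∑ i ∈ S₁, x i ^ p := by
      calc ((k:ℝ)+1) * m ^ p = ∑ _i ∈ S₁, m ^ p := by
            rw [Finset.sum_const, nsmul_eq_mul, hS₁]; push_cast; ring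
        _ ≤ ∑ i ∈ S₁, x i ^ p := Finset.sum_le_sum fun i hi =>
            Real.rpow_le_rpow hm0 (hmin i hi) hp.le
    have hmono := Real.rpow_le_rpow (by positivity) hsum2
      (by positivity : (0:ℝ) ≤ 1/p)
    rw [Real.mul_rpow hk1.le (Real.rpow_nonneg hm0 p),
        ← Real.rpow_mul hm0,
        mul_one_div, div_self hp.ne', Real.rpow_one] at hmono
    have key : ((k:ℝ)+1) ^ (-(1/p)) * (((k:ℝ)+1) ^ ((1:ℝ)/p) * m)
        ≤ ((k:ℝ)+1) ^ (-(1/p)) * (∑ i ∈ S₁, x i ^ p) ^ (1 / p) :=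
      mul_le_mul_of_nonneg_left hmono (Real.rpow_nonneg hk1.le _)
    calc m = ((k:ℝ)+1) ^ (-(1/p)) * (((k:ℝ)+1) ^ ((1:ℝ)/p) * m) := by
          rw [← mul_assoc, ← Real.rpow_add hk1]
          simp
      _ ≤ _ := key
  calc Real.sqrt (∑ j ∈ S, x j ^ 2) ≤ Real.sqrt k * m := h1
    _ ≤ Real.sqrt k * (((k:ℝ) + 1) ^ (-(1/p)) * (∑ i ∈ S₁, x i ^ p) ^ (1 / p)) :=
        mul_le_mul_of_nonneg_left h2 (Real.sqrt_nonneg _)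
    _ = _ := by ring
end
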